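/- (Instantaneous change of variables / continuous normalizing flow, conditional version.) Let z(τ) solve the ODE dz/dτ = g(z(τ), X, τ) on [τ₀, τ₁], where for each fixed X, g is continuously differentiable and Lipschitz in z, continuous in τ. Let p(z, X; τ) denote the joint density of (z(τ), X) when the state X is constant. Then the log-density along trajectories satisfies d/dτ [log p(z(τ), X; τ)] = −∂g(z(τ), X, τ)/∂z, and consequently log p(z(τ₁), X) − log p(z(τ₀), X) = −∫_{τ₀}^{τ₁} ∂g(z(τ), X, τ)/∂z dτ. -/

import Mathlib

open MeasureTheory Set
open Filter Topology Metric


lemma flow_deriv_slope_tendsto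
    (G : ℝ → ℝ → ℝ) (F : ℝ → ℝ → ℝ) (w : ℝ) (L : NNReal)
    (hF0 : ∀ v, F 0 v = v)
    (hFode : ∀ v ε, HasDerivAt (fun e => F e v) (G (F ε v) ε) ε)
    (hFdiff : ∀ ε, DifferentiableAt ℝ (F ε) w)
    (hGdiff : ∀ s, Differentiable ℝ (fun x => G x s))
    (hLip : ∀ s, LipschitzWith L (fun x => G x s))
    (hG'c : ContinuousAt (fun q : ℝ × ℝ => deriv (fun x => G x q.2) q.1) (w, 0)) :
    Tendsto (fun ε => (deriv (F ε) w - 1) / ε) (𝓝[>] (0:ℝ))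
      (𝓝 (deriv (fun x => G x 0) w)) := by
  set c := deriv (fun x => G x 0) w with hc
  rw [Metric.tendsto_nhds]
  intro θ hθ
  set η := θ / 2 with hηdef
  have hηpos : 0 < η := by positivity
  have hηθ : η < θ := by rw [hηdef]; linarith
  -- δ from continuity of ∂G/∂x
  obtain ⟨δ', hδ'pos, hδ'⟩ := Metric.continuousAt_iff.mp hG'c η hηpos
  set δ := δ' / 2 with hδdef
  have hδpos : 0 < δ := by positivity
  have hδ : ∀ x s : ℝ, |x - w| ≤ δ → |s| ≤ δ → |deriv (fun y => G y s) x - c| ≤ η := by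
    intro x s hx hs
    have h1 : dist x w < δ' := by rw [Real.dist_eq]; rw [hδdef] at hx; linarith
    have h2 : dist s 0 < δ' := by rw [Real.dist_eq, sub_zero]; rw [hδdef] at hs; linarith
    have := hδ' (x := (x, s)) (by rw [Prod.dist_eq]; exact max_lt h1 h2)
    rw [Real.dist_eq] at this
    exact this.le
  -- ρ from continuity of e ↦ F e w at 0
  obtain ⟨ρ, hρpos, hρ⟩ := Metric.continuousAt_iff.mp (hFode w 0).continuousAt (δ / 2)
    (by positivity)
  -- ρ₂ so that the final bound is < θ
  have hkcont : ContinuousAt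
      (fun x : ℝ => η * Real.exp (L * x) + |c| * (L * Real.exp (L * x) * x)) 0 := by
    fun_prop
  obtain ⟨ρ₂, hρ₂pos, hρ₂⟩ := Metric.continuousAt_iff.mp hkcont (θ - η) (by linarith)
  set ε₀ := min (min (ρ / 2) (ρ₂ / 2)) δ with hε₀def
  have hε₀pos : 0 < ε₀ := by
    apply lt_min (lt_min (by positivity) (by positivity)) hδpos
  have hε₀δ : ε₀ ≤ δ := min_le_right _ _
  have hε₀ρ : ε₀ < ρ := lt_of_le_of_lt (le_trans (min_le_left _ _) (min_le_left _ _)) (by linarith)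
  have hε₀ρ₂ : ε₀ < ρ₂ :=
    lt_of_le_of_lt (le_trans (min_le_left _ _) (min_le_right _ _)) (by linarith)
  set Kb := η * Real.exp (L * ε₀) + |c| * (L * Real.exp (L * ε₀) * ε₀) with hKbdef
  have hKbθ : Kb < θ := by
    have := hρ₂ (x := ε₀) (by rw [Real.dist_eq, sub_zero, abs_of_pos hε₀pos]; exact hε₀ρ₂)
    simp only [Real.dist_eq] at this
    have h0 : η * Real.exp (↑L * (0:ℝ)) + |c| * (↑L * Real.exp (↑L * (0:ℝ)) * 0) = η := by
      simp
    rw [h0] at this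
    have := abs_lt.mp this
    rw [hKbdef]; linarith [this.1, this.2]
  have hKbnn : 0 ≤ Kb := by
    rw [hKbdef]
    have h1 : (0:ℝ) ≤ Real.exp (L * ε₀) := (Real.exp_pos _).le
    have h2 : (0:ℝ) ≤ (L:ℝ) := L.2
    positivity
  -- Gronwall estimate
  have hFcont : ∀ v, Continuous fun t => F t v := by
    intro v
    have hd : Differentiable ℝ fun t => F t v := fun t => (hFode v t).differentiableAt
    exact hd.continuous
  have hgron : ∀ v, ∀ u ∈ Icc (0:ℝ) ε₀, |F u v - F u w| ≤ |v - w| * Real.exp (L * ε₀) := by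
    intro v u hu
    have := dist_le_of_trajectories_ODE (v := fun t x => G x t) (K := L)
      (f := fun t => F t v) (g := fun t => F t w) (a := 0) (b := ε₀) (δ := dist v w)
      (fun t => hLip t) (hFcont v).continuousOn
      (fun t _ => (hFode v t).hasDerivWithinAt)
      (hFcont w).continuousOn
      (fun t _ => (hFode w t).hasDerivWithinAt)
      (le_of_eq (by simp only [hF0])) u hu
    rw [Real.dist_eq, Real.dist_eq, sub_zero] at this
    refine this.trans ?_
    have : Real.exp (L * u) ≤ Real.exp (L * ε₀) :=
      Real.exp_le_exp.mpr (mul_le_mul_of_nonneg_left hu.2 L.2)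
    exact mul_le_mul_of_nonneg_left this (abs_nonneg _)
  -- radius for v
  set r := (δ / 2) / Real.exp (L * ε₀) with hrdef
  have hrpos : 0 < r := by positivity
  have hrmul : r * Real.exp (L * ε₀) = δ / 2 :=
    div_mul_cancel₀ _ (Real.exp_ne_zero _)
  -- key pointwise estimate
  have key : ∀ ε ∈ Ioc (0:ℝ) ε₀, ∀ v, |v - w| ≤ r →
      |F ε v - F ε w - (v - w) - ε * (c * (v - w))| ≤ Kb * |v - w| * ε := by
    intro ε hε v hv
    have hIcc : Icc (0:ℝ) ε ⊆ Icc (0:ℝ) ε₀ := Icc_subset_Icc le_rfl hε.2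
    have hdist : ∀ s ∈ Icc (0:ℝ) ε, |F s v - F s w| ≤ |v - w| * Real.exp (L * ε₀) :=
      fun s hs => hgron v s (hIcc hs)
    -- A estimate
    have hA : ∀ s ∈ Icc (0:ℝ) ε,
        |F s v - F s w - (v - w)| ≤ L * Real.exp (L * ε₀) * |v - w| * s := by
      intro s hs
      have hmean := Convex.norm_image_sub_le_of_norm_hasDerivWithin_le
        (f := fun u => F u v - F u w - (v - w))
        (f' := fun u => G (F u v) u - G (F u w) u)
        (s := Icc (0:ℝ) s) (C := L * Real.exp (L * ε₀) * |v - w|)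
        (fun u _ => (((hFode v u).sub (hFode w u)).sub_const (v - w)).hasDerivWithinAt)
        (fun u hu => by
          have hlip := (hLip u).dist_le_mul (F u v) (F u w)
          rw [Real.dist_eq, Real.dist_eq] at hlip
          have h2 : |F u v - F u w| ≤ |v - w| * Real.exp (L * ε₀) :=
            hdist u ⟨hu.1, hu.2.trans hs.2⟩
          have : ‖G (F u v) u - G (F u w) u‖ ≤ L * (|v - w| * Real.exp (L * ε₀)) := by
            rw [Real.norm_eq_abs]
            exact hlip.trans (mul_le_mul_of_nonneg_left h2 L.2)
          refine this.trans (le_of_eq ?_); ring)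
        (convex_Icc _ _) (left_mem_Icc.mpr hs.1) (right_mem_Icc.mpr hs.1)
      simp only [hF0, sub_self, sub_zero, Real.norm_eq_abs] at hmean
      rw [abs_of_nonneg hs.1] at hmean
      exact hmean
    -- points stay in the ball
    have haball : ∀ s ∈ Icc (0:ℝ) ε, |F s w - w| ≤ δ / 2 := by
      intro s hs
      have := hρ (x := s) (by
        rw [Real.dist_eq, sub_zero, abs_of_nonneg hs.1]
        exact lt_of_le_of_lt (hs.2.trans hε.2) hε₀ρ)
      rw [hF0, Real.dist_eq] at this
      exact this.le
    have hbball : ∀ s ∈ Icc (0:ℝ) ε, |F s v - w| ≤ δ := by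
      intro s hs
      have h1 : |F s v - F s w| ≤ δ / 2 := by
        refine (hdist s hs).trans ?_
        calc |v - w| * Real.exp (L * ε₀) ≤ r * Real.exp (L * ε₀) :=
              mul_le_mul_of_nonneg_right hv (Real.exp_pos _).le
          _ = δ / 2 := hrmul
      calc |F s v - w| = |(F s v - F s w) + (F s w - w)| := by ring_nf
        _ ≤ |F s v - F s w| + |F s w - w| := abs_add_le _ _
        _ ≤ δ / 2 + δ / 2 := add_le_add h1 (haball s hs)
        _ = δ := by ring
    -- η-estimate for G increments
    have hGsub : ∀ s ∈ Icc (0:ℝ) ε,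
        |G (F s v) s - G (F s w) s - c * (F s v - F s w)| ≤ η * |F s v - F s w| := by
      intro s hs
      have hsδ : |s| ≤ δ := by
        rw [abs_of_nonneg hs.1]; exact (hs.2.trans hε.2).trans hε₀δ
      have hmean := Convex.norm_image_sub_le_of_norm_hasDerivWithin_le
        (f := fun x => G x s - c * x)
        (f' := fun x => deriv (fun y => G y s) x - c)
        (s := closedBall w δ) (C := η)
        (fun x _ => by
          have h1 : HasDerivAt (fun x => G x s - c * x) (deriv (fun y => G y s) x - c) x := by
            have := ((hGdiff s x).hasDerivAt).sub ((hasDerivAt_id x).const_mul c)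
            exact this.congr_deriv (by ring)
          exact h1.hasDerivWithinAt)
        (fun x hx => by
          rw [Real.norm_eq_abs]
          exact hδ x s (by rwa [mem_closedBall, Real.dist_eq] at hx) hsδ)
        (convex_closedBall _ _)
        (x := F s w) (y := F s v)
        (by rw [mem_closedBall, Real.dist_eq]; exact (haball s hs).trans (by linarith))
        (by rw [mem_closedBall, Real.dist_eq]; exact hbball s hs)
      rw [Real.norm_eq_abs, Real.norm_eq_abs] at hmean
      have heq : G (F s v) s - c * F s v - (G (F s w) s - c * F s w)
          = G (F s v) s - G (F s w) s - c * (F s v - F s w) := by ring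
      rw [heq] at hmean
      exact hmean
    -- B estimate
    have hmean := Convex.norm_image_sub_le_of_norm_hasDerivWithin_le
      (f := fun s => F s v - F s w - (v - w) - s * (c * (v - w)))
      (f' := fun s => G (F s v) s - G (F s w) s - c * (v - w))
      (s := Icc (0:ℝ) ε) (C := Kb * |v - w|)
      (fun s _ => ((((hFode v s).sub (hFode w s)).sub_const (v - w)).sub
        (hasDerivAt_mul_const (c * (v - w)))).hasDerivWithinAt)
      (fun s hs => by
        show ‖G (F s v) s - G (F s w) s - c * (v - w)‖ ≤ Kb * |v - w|
        rw [Real.norm_eq_abs]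
        have heq : G (F s v) s - G (F s w) s - c * (v - w)
            = (G (F s v) s - G (F s w) s - c * (F s v - F s w))
              + c * (F s v - F s w - (v - w)) := by ring
        rw [heq]
        calc |_ + _| ≤ |G (F s v) s - G (F s w) s - c * (F s v - F s w)|
              + |c * (F s v - F s w - (v - w))| := abs_add_le _ _
          _ ≤ η * |F s v - F s w| + |c| * (L * Real.exp (L * ε₀) * |v - w| * s) := by
              refine add_le_add (hGsub s hs) ?_
              rw [abs_mul]
              exact mul_le_mul_of_nonneg_left (hA s hs) (abs_nonneg _)
          _ ≤ η * (|v - w| * Real.exp (L * ε₀))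
              + |c| * (L * Real.exp (L * ε₀) * |v - w| * ε₀) := by
              refine add_le_add (mul_le_mul_of_nonneg_left (hdist s hs) hηpos.le) ?_
              refine mul_le_mul_of_nonneg_left ?_ (abs_nonneg _)
              have : s ≤ ε₀ := hs.2.trans hε.2
              have hnn : (0:ℝ) ≤ L * Real.exp (L * ε₀) * |v - w| := by
                have := L.2; positivity
              exact mul_le_mul_of_nonneg_left this hnn
          _ = Kb * |v - w| := by rw [hKbdef]; ring)
      (convex_Icc _ _) (left_mem_Icc.mpr hε.1.le) (right_mem_Icc.mpr hε.1.le)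
    simp only [hF0, sub_self, zero_mul, sub_zero, Real.norm_eq_abs] at hmean
    rw [abs_of_pos hε.1] at hmean
    exact hmean
  -- now deduce the bound on the derivative
  filter_upwards [Ioc_mem_nhdsGT_of_mem (left_mem_Ico.mpr hε₀pos)] with ε hε
  have hD : HasDerivAt (fun v => F ε v - F ε w - (v - w) - ε * (c * (v - w)))
      (deriv (F ε) w - 1 - ε * c) w := by
    have h1 : HasDerivAt (F ε) (deriv (F ε) w) w := (hFdiff ε).hasDerivAt
    have h2 : HasDerivAt (fun v : ℝ => v - w) 1 w := (hasDerivAt_id w).sub_const w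
    have h3 : HasDerivAt (fun v => ε * (c * (v - w))) (ε * c) w := by
      have := h2.const_mul (ε * c)
      simpa [mul_assoc] using this
    exact ((h1.sub_const (F ε w)).sub h2).sub h3
  have hbound : ∀ᶠ v in 𝓝[≠] w,
      |slope (fun v => F ε v - F ε w - (v - w) - ε * (c * (v - w))) w v| ≤ Kb * ε := by
    have hball : ∀ᶠ v in 𝓝 w, |v - w| ≤ r :=
      eventually_of_mem (Metric.closedBall_mem_nhds w hrpos)
        (fun v hv => by rwa [mem_closedBall, Real.dist_eq] at hv)
    filter_upwards [eventually_nhdsWithin_of_eventually_nhds hball, self_mem_nhdsWithin]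
      with v hvr hvne
    rw [slope_def_field]
    have hw0 : F ε w - F ε w - (w - w) - ε * (c * (w - w)) = 0 := by ring
    rw [hw0, sub_zero, abs_div]
    rw [div_le_iff₀ (abs_pos.mpr (sub_ne_zero.mpr hvne))]
    calc |F ε v - F ε w - (v - w) - ε * (c * (v - w))| ≤ Kb * |v - w| * ε :=
          key ε hε v hvr
      _ = Kb * ε * |v - w| := by ring
  have htend : Tendsto
      (fun v => |slope (fun v => F ε v - F ε w - (v - w) - ε * (c * (v - w))) w v|)
      (𝓝[≠] w) (𝓝 |deriv (F ε) w - 1 - ε * c|) :=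
    (hasDerivAt_iff_tendsto_slope.mp hD).abs
  have hfin : |deriv (F ε) w - 1 - ε * c| ≤ Kb * ε := le_of_tendsto htend hbound
  rw [Real.dist_eq]
  have hεpos := hε.1
  have heq : (deriv (F ε) w - 1) / ε - c = (deriv (F ε) w - 1 - ε * c) / ε := by
    field_simp
  rw [heq, abs_div, abs_of_pos hεpos, div_lt_iff₀ hεpos]
  calc |deriv (F ε) w - 1 - ε * c| ≤ Kb * ε := hfin
    _ < θ * ε := by exact mul_lt_mul_of_pos_right hKbθ hεpos

/-- Instantaneous change of variables for a conditional continuous normalizing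
flow: if `z` solves `dz/dτ = g(z(τ), X, τ)` with `X` held constant, the
flow maps are diffeomorphisms transforming the joint density `p(·, X; τ)` by
the change-of-variables formula, then along trajectories
`d/dτ log p(z(τ), X; τ) = −∂g(z(τ), X, τ)/∂z`, and consequently
`log p(z(τ₁), X; τ₁) − log p(z(τ₀), X; τ₀) = −∫_{τ₀}^{τ₁} ∂g(z(τ), X, τ)/∂z dτ`. -/
theorem stmt13 {D : ℕ}
    (g : ℝ → EuclideanSpace ℝ (Fin D) → ℝ → ℝ)
    (p : ℝ → EuclideanSpace ℝ (Fin D) → ℝ → ℝ)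
    (X : EuclideanSpace ℝ (Fin D)) (τ₀ τ₁ : ℝ) (hτ : τ₀ ≤ τ₁)
    (z : ℝ → ℝ)
    -- `z` solves the ODE
    (hODE : ∀ τ, HasDerivAt z (g (z τ) X τ) τ)
    -- regularity of `g`: C¹ and Lipschitz in `z`, continuous in `τ`
    (L : NNReal) (hgC1 : ∀ τ, Differentiable ℝ (fun w => g w X τ))
    (hgLip : ∀ τ, LipschitzWith L (fun w => g w X τ))
    (hgcont : Continuous (fun q : ℝ × ℝ => g q.1 X q.2))
    (hgderiv : Continuous (fun q : ℝ × ℝ => deriv (fun w => g w X q.2) q.1))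
    -- positivity and smoothness of the density
    (hppos : ∀ w τ, 0 < p w X τ)
    (hpC1 : Differentiable ℝ (fun q : ℝ × ℝ => p q.1 X q.2))
    -- flow maps `T τ ε : z(τ) ↦ z(τ+ε)`
    (T : ℝ → ℝ → ℝ → ℝ)
    (hT0 : ∀ τ w, T τ 0 w = w)
    (hTode : ∀ τ w ε, HasDerivAt (fun e => T τ e w) (g (T τ ε w) X (τ + ε)) ε)
    (hTz : ∀ τ ε, T τ ε (z τ) = z (τ + ε))
    (hTdiff : ∀ τ ε, Differentiable ℝ (fun w => T τ ε w))
    -- densities transform by change of variables along the flow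
    (hCoV : ∀ τ ε w,
      p (T τ ε w) X (τ + ε) * deriv (fun v => T τ ε v) w = p w X τ) :
    (∀ τ ∈ Icc τ₀ τ₁,
        HasDerivAt (fun s => Real.log (p (z s) X s))
          (-(deriv (fun w => g w X τ) (z τ))) τ)
    ∧ Real.log (p (z τ₁) X τ₁) - Real.log (p (z τ₀) X τ₀)
        = -∫ τ in τ₀..τ₁, deriv (fun w => g w X τ) (z τ) := by
  have hz : Continuous z := by
    have hd : Differentiable ℝ z := fun t => (hODE t).differentiableAt
    exact hd.continuous
  have main : ∀ τ : ℝ, HasDerivAt (fun s => Real.log (p (z s) X s))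
      (-(deriv (fun w => g w X τ) (z τ))) τ := by
    intro τ
    set c := deriv (fun w => g w X τ) (z τ) with hcdef
    -- Step 1: one-sided limit of the slope of the spatial derivative of the flow
    have htendA : Filter.Tendsto (fun ε => (deriv (fun v => T τ ε v) (z τ) - 1) / ε)
        (𝓝[>] (0:ℝ)) (𝓝 c) := by
      have haux := flow_deriv_slope_tendsto (fun x s => g x X (τ + s)) (fun e v => T τ e v)
        (z τ) L
        (hT0 τ) (fun v ε => hTode τ v ε) (fun ε => (hTdiff τ ε).differentiableAt)
        (fun s => hgC1 (τ + s)) (fun s => hgLip (τ + s))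
        (by
          have heq : (fun q : ℝ × ℝ => deriv (fun x => g x X (τ + q.2)) q.1)
              = (fun q : ℝ × ℝ => deriv (fun w => g w X q.2) q.1)
                ∘ (fun q : ℝ × ℝ => (q.1, τ + q.2)) := rfl
          rw [heq]
          exact (hgderiv.comp
            (continuous_fst.prodMk (continuous_const.add continuous_snd))).continuousAt)
      have heq2 : deriv (fun x => g x X (τ + 0)) (z τ) = c := by
        rw [hcdef]
        congr 1
        funext x
        rw [add_zero]
      rw [show deriv (fun x => (fun x s => g x X (τ + s)) x 0) (z τ)
          = deriv (fun x => g x X (τ + 0)) (z τ) from rfl, heq2] at haux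
      exact haux
    -- Step 2: two-sided differentiability of the Jacobian via the density representation
    set Jp := fun ε => p (z τ) X τ / p (T τ ε (z τ)) X (τ + ε) with hJpdef
    have hqdiff : ∀ ε : ℝ, DifferentiableAt ℝ (fun e => p (T τ e (z τ)) X (τ + e)) ε := by
      intro ε
      have h1 : DifferentiableAt ℝ (fun e : ℝ => ((T τ e (z τ), τ + e) : ℝ × ℝ)) ε :=
        DifferentiableAt.prodMk (hTode τ (z τ) ε).differentiableAt
          ((differentiableAt_const τ).add differentiableAt_id)
      exact (hpC1.differentiableAt).comp ε h1
    have hq0 : p (T τ 0 (z τ)) X (τ + 0) = p (z τ) X τ := by rw [hT0, add_zero]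
    have hJpdiff : DifferentiableAt ℝ Jp 0 := by
      rw [hJpdef]
      exact (differentiableAt_const _).div (hqdiff 0) (by rw [hq0]; exact (hppos _ _).ne')
    have hJp0 : Jp 0 = 1 := by
      show p (z τ) X τ / p (T τ 0 (z τ)) X (τ + 0) = 1
      rw [hq0]
      exact div_self (hppos _ _).ne'
    have hJeq : ∀ ε, deriv (fun v => T τ ε v) (z τ) = Jp ε := by
      intro ε
      show deriv (fun v => T τ ε v) (z τ) = p (z τ) X τ / p (T τ ε (z τ)) X (τ + ε)
      rw [eq_div_iff (hppos (T τ ε (z τ)) (τ + ε)).ne', mul_comm]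
      exact hCoV τ ε (z τ)
    have hJpD : HasDerivAt Jp (deriv Jp 0) 0 := hJpdiff.hasDerivAt
    have hslope : Filter.Tendsto (fun ε => (Jp ε - 1) / ε) (𝓝[≠] (0:ℝ))
        (𝓝 (deriv Jp 0)) := by
      refine (hasDerivAt_iff_tendsto_slope.mp hJpD).congr fun ε => ?_
      rw [slope_def_field, hJp0, sub_zero]
    have hslope' : Filter.Tendsto (fun ε => (Jp ε - 1) / ε) (𝓝[>] (0:ℝ))
        (𝓝 (deriv Jp 0)) :=
      hslope.mono_left (nhdsWithin_mono _ (fun x hx => by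
        simp only [Set.mem_compl_iff, Set.mem_singleton_iff]
        exact ne_of_gt hx))
    have htendA' : Filter.Tendsto (fun ε => (Jp ε - 1) / ε) (𝓝[>] (0:ℝ)) (𝓝 c) :=
      htendA.congr fun ε => by rw [hJeq ε]
    have hcd : deriv Jp 0 = c := tendsto_nhds_unique hslope' htendA'
    have hJpD' : HasDerivAt Jp c 0 := hcd ▸ hJpD
    -- Step 3: log-density along the trajectory
    have hJpos : ∀ ε, 0 < Jp ε := fun ε => div_pos (hppos _ _) (hppos _ _)
    have hφeq : ∀ ε : ℝ, Real.log (p (z (τ + ε)) X (τ + ε))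
        = Real.log (p (z τ) X τ) - Real.log (Jp ε) := by
      intro ε
      have h := hCoV τ ε (z τ)
      rw [hTz τ ε, hJeq ε] at h
      have hpe : p (z (τ + ε)) X (τ + ε) = p (z τ) X τ / Jp ε := by
        rw [eq_div_iff (hJpos ε).ne']
        exact h
      rw [hpe, Real.log_div (hppos _ _).ne' (hJpos ε).ne']
    have hlogJp : HasDerivAt (fun ε => Real.log (Jp ε)) c 0 := by
      have := hJpD'.log (by rw [hJp0]; norm_num)
      rwa [hJp0, div_one] at this
    have hψ : HasDerivAt (fun ε => Real.log (p (z (τ + ε)) X (τ + ε))) (-c) 0 := by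
      have h1 : HasDerivAt (fun ε => Real.log (p (z τ) X τ) - Real.log (Jp ε)) (-c) 0 :=
        hlogJp.const_sub _
      exact h1.congr_of_eventuallyEq (Filter.Eventually.of_forall fun ε => hφeq ε)
    -- Step 4: transfer the derivative from 0 to τ
    have h3 := HasDerivAt.comp_add_const
      (f := fun ε => Real.log (p (z (τ + ε)) X (τ + ε))) (f' := -c)
      τ (-τ) (by simpa using hψ)
    have h4 : ∀ s : ℝ, τ + (s + -τ) = s := fun s => by ring
    simpa [h4] using h3
  refine ⟨fun τ _ => main τ, ?_⟩
  have hdcont : Continuous (fun τ => deriv (fun w => g w X τ) (z τ)) := by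
    have heq : (fun τ => deriv (fun w => g w X τ) (z τ))
        = (fun q : ℝ × ℝ => deriv (fun w => g w X q.2) q.1) ∘ (fun τ => (z τ, τ)) := rfl
    rw [heq]
    exact hgderiv.comp (hz.prodMk continuous_id)
  have hint : IntervalIntegrable (fun τ => deriv (fun w => g w X τ) (z τ))
      MeasureTheory.volume τ₀ τ₁ := hdcont.intervalIntegrable _ _
  have hFTC := intervalIntegral.integral_eq_sub_of_hasDerivAt
    (f := fun s => Real.log (p (z s) X s))
    (f' := fun τ => -(deriv (fun w => g w X τ) (z τ)))
    (fun t _ => main t) hint.neg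
  rw [intervalIntegral.integral_neg] at hFTC
  linarith [hFTC]
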